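/- Let (Z, μ) be a probability space and let F be a finite nonempty family of bounded measurable functions f : Z → ℝ. Let z₁, …, z_m (m ≥ 1) be independent random points each distributed according to μ, and let ε₁, …, ε_m be independent Rademacher signs (uniform on {−1, +1}), independent of the sample. Then the expected uniform deviation of empirical means from true means is bounded by twice the expected empirical Rademacher complexity: E_{z} [ max_{f ∈ F} ( E_μ[f] − (1/m) Σ_{i=1}^m f(zᵢ) ) ] ≤ 2 · E_{z, ε} [ max_{f ∈ F} (1/m) Σ_{i=1}^m εᵢ f(zᵢ) ]. -/
import Mathlib


open MeasureTheory

section Aux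

private lemma int_of_bdd {α : Type*} [MeasurableSpace α] (ρ : Measure α) [IsFiniteMeasure ρ]
    {g : α → ℝ} (hg : Measurable g) {B : ℝ} (hB : ∀ x, |g x| ≤ B) : Integrable g ρ :=
  Integrable.mono' (integrable_const B) hg.aestronglyMeasurable
    (Filter.Eventually.of_forall fun x => by simpa [Real.norm_eq_abs] using hB x)

private lemma abs_ciSup_le' {ι : Type*} [Fintype ι] [Nonempty ι] {g : ι → ℝ} {B : ℝ}
    (h : ∀ j, |g j| ≤ B) : |⨆ j, g j| ≤ B := by
  rw [abs_le]
  refine ⟨le_trans (abs_le.mp (h (Classical.arbitrary ι))).1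
      (le_ciSup (Set.Finite.bddAbove (Set.finite_range g)) _),
    ciSup_le fun j => (abs_le.mp (h j)).2⟩

private lemma ciSup_integral_le' {α ι : Type*} [MeasurableSpace α] [Fintype ι] [Nonempty ι]
    (ρ : Measure α) [IsFiniteMeasure ρ] (g : ι → α → ℝ) (hg : ∀ j, Measurable (g j))
    {B : ℝ} (hB : ∀ j x, |g j x| ≤ B) :
    (⨆ j, ∫ x, g j x ∂ρ) ≤ ∫ x, ⨆ j, g j x ∂ρ :=
  ciSup_le fun j => integral_mono (int_of_bdd ρ (hg j) (hB j))
    (int_of_bdd ρ (Measurable.iSup hg) (fun x => abs_ciSup_le' (fun j' => hB j' x)))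
    (fun x => le_ciSup (Set.Finite.bddAbove (Set.finite_range fun j' => g j' x)) j)

private lemma integral_comp_mp {α β : Type*} [MeasurableSpace α] [MeasurableSpace β]
    {ρ : Measure α} {σ : Measure β} {e : α → β} (h : MeasurePreserving e ρ σ)
    {g : β → ℝ} (hg : Measurable g) : ∫ x, g (e x) ∂ρ = ∫ y, g y ∂σ := by
  rw [← h.map_eq]
  exact (integral_map h.measurable.aemeasurable hg.aestronglyMeasurable).symm

private lemma mp_eval {Z : Type*} [MeasurableSpace Z] (μ : Measure Z) [IsProbabilityMeasure μ]
    {m : ℕ} (i : Fin m) :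
    MeasurePreserving (fun z : Fin m → Z => z i) (Measure.pi fun _ => μ) μ := by
  classical
  refine ⟨measurable_pi_apply i, ?_⟩
  ext s hs
  rw [Measure.map_apply (measurable_pi_apply i) hs]
  have hpre : (fun z : Fin m → Z => z i) ⁻¹' s
      = Set.pi Set.univ (Function.update (fun _ : Fin m => Set.univ) i s) :=
    Set.eval_preimage
  rw [hpre, Measure.pi_pi]
  rw [Finset.prod_eq_single i (fun b _ hb => by simp [Function.update_of_ne hb])
    (fun h => absurd (Finset.mem_univ i) h)]
  simp

end Aux

/-- **Symmetrization (upper bound of Lemma 1).**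
For a probability space `(Z, μ)`, a finite nonempty family of bounded measurable
functions `f j : Z → ℝ` (indexed by `j : ι`), an i.i.d. sample `z : Fin m → Z`
drawn from the product measure `μ^m`, and independent Rademacher signs
(modelled by averaging over all `ε : Fin m → Bool`, each `Bool` value encoding a
sign `±1`, which is exactly the uniform product distribution on sign vectors),
the expected uniform deviation of empirical means from true means is bounded by
twice the expected empirical Rademacher complexity. -/
theorem expected_sup_deviation_le_two_rademacher
    {Z : Type*} [MeasurableSpace Z] (μ : Measure Z) [IsProbabilityMeasure μ]
    {ι : Type*} [Fintype ι] [Nonempty ι]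
    (f : ι → Z → ℝ) (hmeas : ∀ j, Measurable (f j))
    (C : ℝ) (hbdd : ∀ j z, |f j z| ≤ C)
    (m : ℕ) (hm : 1 ≤ m) :
    (∫ z : Fin m → Z,
        (⨆ j : ι, ((∫ t, f j t ∂μ) - (1 / (m : ℝ)) * ∑ i, f j (z i)))
        ∂(Measure.pi fun _ : Fin m => μ))
      ≤ 2 * ∫ z : Fin m → Z,
          ((∑ ε : Fin m → Bool,
              ⨆ j : ι, (1 / (m : ℝ)) * ∑ i, (if ε i then (1 : ℝ) else -1) * f j (z i))
            / 2 ^ m)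
          ∂(Measure.pi fun _ : Fin m => μ) := by
  classical
  have hZ : Nonempty Z := by
    by_contra h
    have h0 : μ Set.univ = 0 := by
      rw [Set.univ_eq_empty_iff.mpr (not_nonempty_iff.mp h)]; exact measure_empty
    rw [measure_univ] at h0
    exact one_ne_zero h0
  have hC0 : 0 ≤ C := (abs_nonneg _).trans (hbdd (Classical.arbitrary ι) (Classical.arbitrary Z))
  have hm0 : (0:ℝ) < m := by exact_mod_cast hm
  set ν : Measure (Fin m → Z) := Measure.pi fun _ : Fin m => μ with hν
  set π2 : Measure (Fin m → Z × Z) := Measure.pi fun _ : Fin m => μ.prod μ with hπ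
  haveI : IsProbabilityMeasure ν := by rw [hν]; infer_instance
  haveI : IsProbabilityMeasure π2 := by rw [hπ]; infer_instance
  -- averaging bound
  have habs : ∀ (B : ℝ) (g : Fin m → ℝ), (∀ i, |g i| ≤ B) → |(1/(m:ℝ)) * ∑ i, g i| ≤ B := by
    intro B g hg
    have h1 : |∑ i, g i| ≤ (m:ℝ) * B := by
      calc |∑ i, g i| ≤ ∑ i, |g i| := Finset.abs_sum_le_sum_abs _ _
        _ ≤ ∑ _i : Fin m, B := Finset.sum_le_sum fun i _ => hg i
        _ = (m:ℝ) * B := by simp [mul_comm]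
    rw [abs_mul, abs_of_nonneg (by positivity : (0:ℝ) ≤ 1/(m:ℝ))]
    calc (1/(m:ℝ)) * |∑ i, g i| ≤ (1/(m:ℝ)) * ((m:ℝ) * B) :=
          mul_le_mul_of_nonneg_left h1 (by positivity)
      _ = B := by field_simp
  -- basic measurability / bounds
  have hfzi_meas : ∀ (j : ι) (i : Fin m), Measurable fun z : Fin m → Z => f j (z i) :=
    fun j i => (hmeas j).comp (measurable_pi_apply i)
  have hS_meas : ∀ j, Measurable fun z : Fin m → Z => (1/(m:ℝ)) * ∑ i, f j (z i) :=
    fun j => (Finset.measurable_sum _ fun i _ => hfzi_meas j i).const_mul _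
  have hS_bdd : ∀ (j : ι) (z : Fin m → Z), |(1/(m:ℝ)) * ∑ i, f j (z i)| ≤ C :=
    fun j z => habs C _ (fun i => hbdd j _)
  have hIbdd : ∀ j, |∫ t, f j t ∂μ| ≤ C := by
    intro j
    have := norm_integral_le_of_norm_le_const (μ := μ) (C := C) (f := f j)
      (Filter.Eventually.of_forall fun t => by simpa [Real.norm_eq_abs] using hbdd j t)
    simpa [Real.norm_eq_abs, measure_univ] using this
  -- empirical mean has the right expectation
  have hI : ∀ j, ∫ z, (1/(m:ℝ)) * ∑ i, f j (z i) ∂ν = ∫ t, f j t ∂μ := by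
    intro j
    rw [integral_const_mul,
      integral_finset_sum _ (fun i _ => int_of_bdd ν (hfzi_meas j i) (fun z => hbdd j _))]
    have heval : ∀ i : Fin m, ∫ z, f j (z i) ∂ν = ∫ t, f j t ∂μ := fun i =>
      integral_comp_mp (mp_eval μ i) (hmeas j)
    rw [Finset.sum_congr rfl (fun i _ => heval i), Finset.sum_const, Finset.card_univ,
      Fintype.card_fin, nsmul_eq_mul]
    field_simp
  -- Rademacher-type suprema
  have hRad_meas : ∀ c : Fin m → ℝ,
      Measurable fun z : Fin m → Z => ⨆ j, (1/(m:ℝ)) * ∑ i, c i * f j (z i) :=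
    fun c => Measurable.iSup fun j =>
      ((Finset.measurable_sum _ fun i _ => (hfzi_meas j i).const_mul (c i)).const_mul _)
  have hsgn_mul_bdd : ∀ (c : Fin m → ℝ), (∀ i, |c i| ≤ 1) →
      ∀ (j : ι) (i : Fin m) (x : Z), |c i * f j x| ≤ C := by
    intro c hc j i x
    rw [abs_mul]
    calc |c i| * |f j x| ≤ 1 * C := mul_le_mul (hc i) (hbdd j x) (abs_nonneg _) zero_le_one
      _ = C := one_mul C
  have hRad_bdd : ∀ (c : Fin m → ℝ), (∀ i, |c i| ≤ 1) →
      ∀ z : Fin m → Z, |⨆ j, (1/(m:ℝ)) * ∑ i, c i * f j (z i)| ≤ C :=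
    fun c hc z => abs_ciSup_le' fun j => habs C _ (fun i => hsgn_mul_bdd c hc j i (z i))
  have hsgn1 : ∀ (ε : Fin m → Bool) (i : Fin m), |(if ε i then (1:ℝ) else -1)| ≤ 1 := by
    intro ε i; by_cases h : ε i <;> simp [h]
  -- the two-sample sup function
  have hG_meas : Measurable fun p : (Fin m → Z) × (Fin m → Z) =>
      ⨆ j, ((1/(m:ℝ)) * ∑ i, f j (p.2 i) - (1/(m:ℝ)) * ∑ i, f j (p.1 i)) :=
    Measurable.iSup fun j => ((hS_meas j).comp measurable_snd).sub ((hS_meas j).comp measurable_fst)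
  have habs_sub : ∀ a b : ℝ, |a| ≤ C → |b| ≤ C → |a - b| ≤ 2 * C := by
    intro a b ha hb
    calc |a - b| ≤ |a| + |b| := abs_sub a b
      _ ≤ C + C := add_le_add ha hb
      _ = 2 * C := by ring
  have hG_bdd : ∀ p : (Fin m → Z) × (Fin m → Z),
      |⨆ j, ((1/(m:ℝ)) * ∑ i, f j (p.2 i) - (1/(m:ℝ)) * ∑ i, f j (p.1 i))| ≤ 2 * C :=
    fun p => abs_ciSup_le' fun j => habs_sub _ _ (hS_bdd j p.2) (hS_bdd j p.1)
  have hG_int : Integrable (fun p : (Fin m → Z) × (Fin m → Z) =>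
      ⨆ j, ((1/(m:ℝ)) * ∑ i, f j (p.2 i) - (1/(m:ℝ)) * ∑ i, f j (p.1 i))) (ν.prod ν) :=
    int_of_bdd _ hG_meas hG_bdd
  -- Step 1: Jensen / ghost sample
  have step1 : (∫ z, (⨆ j, ((∫ t, f j t ∂μ) - (1/(m:ℝ)) * ∑ i, f j (z i))) ∂ν)
      ≤ ∫ p, (⨆ j, ((1/(m:ℝ)) * ∑ i, f j (p.2 i) - (1/(m:ℝ)) * ∑ i, f j (p.1 i)))
          ∂(ν.prod ν) := by
    have key : ∀ z : Fin m → Z,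
        (⨆ j, ((∫ t, f j t ∂μ) - (1/(m:ℝ)) * ∑ i, f j (z i)))
        ≤ ∫ z', (⨆ j, ((1/(m:ℝ)) * ∑ i, f j (z' i) - (1/(m:ℝ)) * ∑ i, f j (z i))) ∂ν := by
      intro z
      have h1 : ∀ j, (∫ t, f j t ∂μ) - (1/(m:ℝ)) * ∑ i, f j (z i)
          = ∫ z', ((1/(m:ℝ)) * ∑ i, f j (z' i) - (1/(m:ℝ)) * ∑ i, f j (z i)) ∂ν := by
        intro j
        rw [integral_sub (int_of_bdd ν (hS_meas j) (hS_bdd j)) (integrable_const _),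
          integral_const, hI j]
        simp [measure_univ]
      calc (⨆ j, ((∫ t, f j t ∂μ) - (1/(m:ℝ)) * ∑ i, f j (z i)))
          = ⨆ j, ∫ z', ((1/(m:ℝ)) * ∑ i, f j (z' i) - (1/(m:ℝ)) * ∑ i, f j (z i)) ∂ν :=
            iSup_congr h1
        _ ≤ _ := ciSup_integral_le' ν _
            (fun j => (hS_meas j).sub measurable_const) (B := 2 * C)
            (fun j x => habs_sub _ _ (hS_bdd j x) (hS_bdd j z))
    have hD_meas : Measurable fun z : Fin m → Z =>
        ⨆ j, ((∫ t, f j t ∂μ) - (1/(m:ℝ)) * ∑ i, f j (z i)) :=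
      Measurable.iSup fun j => measurable_const.sub (hS_meas j)
    have hD_bdd : ∀ z : Fin m → Z, |⨆ j, ((∫ t, f j t ∂μ) - (1/(m:ℝ)) * ∑ i, f j (z i))| ≤ 2 * C :=
      fun z => abs_ciSup_le' fun j => habs_sub _ _ (hIbdd j) (hS_bdd j z)
    calc (∫ z, (⨆ j, ((∫ t, f j t ∂μ) - (1/(m:ℝ)) * ∑ i, f j (z i))) ∂ν)
        ≤ ∫ z, (∫ z', (⨆ j, ((1/(m:ℝ)) * ∑ i, f j (z' i) - (1/(m:ℝ)) * ∑ i, f j (z i))) ∂ν) ∂ν :=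
          integral_mono (int_of_bdd ν hD_meas hD_bdd) hG_int.integral_prod_left key
      _ = _ := (integral_prod _ hG_int).symm
  -- Step 2: transfer to the coupled space
  have he : MeasurePreserving (MeasurableEquiv.arrowProdEquivProdArrow Z Z (Fin m)) π2
      (ν.prod ν) :=
    measurePreserving_arrowProdEquivProdArrow Z Z (Fin m) (fun _ => μ) (fun _ => μ)
  have hH_meas : Measurable fun w : Fin m → Z × Z =>
      ⨆ j, (1/(m:ℝ)) * ∑ i, (f j ((w i).2) - f j ((w i).1)) :=
    Measurable.iSup fun j => (Finset.measurable_sum _ fun i _ =>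
      ((hmeas j).comp (measurable_pi_apply i).snd).sub
        ((hmeas j).comp (measurable_pi_apply i).fst)).const_mul _
  have step2 : (∫ p, (⨆ j, ((1/(m:ℝ)) * ∑ i, f j (p.2 i) - (1/(m:ℝ)) * ∑ i, f j (p.1 i)))
        ∂(ν.prod ν))
      = ∫ w, (⨆ j, (1/(m:ℝ)) * ∑ i, (f j ((w i).2) - f j ((w i).1))) ∂π2 := by
    rw [← integral_comp_mp he hG_meas]
    refine integral_congr_ae (Filter.Eventually.of_forall fun w => ?_)
    refine iSup_congr fun j => ?_
    show (1/(m:ℝ)) * ∑ i, f j ((w i).2) - (1/(m:ℝ)) * ∑ i, f j ((w i).1) = _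
    rw [← mul_sub, ← Finset.sum_sub_distrib]
  -- Step 3: sign-flip invariance
  have hHe_meas : ∀ c : Fin m → ℝ, Measurable fun w : Fin m → Z × Z =>
      ⨆ j, (1/(m:ℝ)) * ∑ i, c i * (f j ((w i).2) - f j ((w i).1)) :=
    fun c => Measurable.iSup fun j => (Finset.measurable_sum _ fun i _ =>
      (((hmeas j).comp (measurable_pi_apply i).snd).sub
        ((hmeas j).comp (measurable_pi_apply i).fst)).const_mul (c i)).const_mul _
  have step3 : ∀ ε : Fin m → Bool,
      (∫ w, (⨆ j, (1/(m:ℝ)) * ∑ i, (f j ((w i).2) - f j ((w i).1))) ∂π2)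
      = ∫ w, (⨆ j, (1/(m:ℝ)) * ∑ i,
          (if ε i then (1:ℝ) else -1) * (f j ((w i).2) - f j ((w i).1))) ∂π2 := by
    intro ε
    have hσ : MeasurePreserving
        (fun w : Fin m → Z × Z => fun i => if ε i then w i else Prod.swap (w i)) π2 π2 := by
      have h := measurePreserving_pi (fun _ : Fin m => μ.prod μ) (fun _ : Fin m => μ.prod μ)
        (f := fun i => if ε i then id else Prod.swap)
        (fun i => by
          by_cases h : ε i
          · simpa [h] using MeasurePreserving.id (μ.prod μ)
          · simpa [h] using (Measure.measurePreserving_swap (μ := μ) (ν := μ)))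
      simpa [ite_apply] using h
    rw [← integral_comp_mp hσ hH_meas]
    refine integral_congr_ae (Filter.Eventually.of_forall fun w => ?_)
    refine iSup_congr fun j => ?_
    congr 1
    refine Finset.sum_congr rfl fun i _ => ?_
    by_cases h : ε i <;> simp [h]
  -- projections are measure preserving
  have hproj2 : MeasurePreserving (fun w : Fin m → Z × Z => fun i => (w i).2) π2 ν :=
    measurePreserving_pi _ _ (fun _ : Fin m =>
      ⟨measurable_snd, by rw [Measure.map_snd_prod]; simp [measure_univ]⟩)
  have hproj1 : MeasurePreserving (fun w : Fin m → Z × Z => fun i => (w i).1) π2 ν :=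
    measurePreserving_pi _ _ (fun _ : Fin m =>
      ⟨measurable_fst, by rw [Measure.map_fst_prod]; simp [measure_univ]⟩)
  -- Step 4+5: bound each signed integral by two Rademacher terms
  have step45 : ∀ ε : Fin m → Bool,
      (∫ w, (⨆ j, (1/(m:ℝ)) * ∑ i,
          (if ε i then (1:ℝ) else -1) * (f j ((w i).2) - f j ((w i).1))) ∂π2)
      ≤ (∫ z, (⨆ j, (1/(m:ℝ)) * ∑ i, (if ε i then (1:ℝ) else -1) * f j (z i)) ∂ν)
        + ∫ z, (⨆ j, (1/(m:ℝ)) * ∑ i, (if !ε i then (1:ℝ) else -1) * f j (z i)) ∂ν := by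
    intro ε
    have hsup2_meas : Measurable fun w : Fin m → Z × Z =>
        ⨆ j, (1/(m:ℝ)) * ∑ i, (if ε i then (1:ℝ) else -1) * f j ((w i).2) :=
      Measurable.iSup fun j => (Finset.measurable_sum _ fun i _ =>
        ((hmeas j).comp (measurable_pi_apply i).snd).const_mul _).const_mul _
    have hsup1_meas : Measurable fun w : Fin m → Z × Z =>
        ⨆ j, (1/(m:ℝ)) * ∑ i, (if !ε i then (1:ℝ) else -1) * f j ((w i).1) :=
      Measurable.iSup fun j => (Finset.measurable_sum _ fun i _ =>
        ((hmeas j).comp (measurable_pi_apply i).fst).const_mul _).const_mul _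
    have hsup2_bdd : ∀ w : Fin m → Z × Z,
        |⨆ j, (1/(m:ℝ)) * ∑ i, (if ε i then (1:ℝ) else -1) * f j ((w i).2)| ≤ C :=
      fun w => abs_ciSup_le' fun j => habs C _
        (fun i => hsgn_mul_bdd _ (hsgn1 ε) j i ((w i).2))
    have hsup1_bdd : ∀ w : Fin m → Z × Z,
        |⨆ j, (1/(m:ℝ)) * ∑ i, (if !ε i then (1:ℝ) else -1) * f j ((w i).1)| ≤ C :=
      fun w => abs_ciSup_le' fun j => habs C _
        (fun i => hsgn_mul_bdd _ (hsgn1 (fun i => !ε i)) j i ((w i).1))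
    have hHε_meas : Measurable fun w : Fin m → Z × Z =>
        ⨆ j, (1/(m:ℝ)) * ∑ i, (if ε i then (1:ℝ) else -1) * (f j ((w i).2) - f j ((w i).1)) :=
      hHe_meas _
    have hHε_bdd : ∀ w : Fin m → Z × Z,
        |⨆ j, (1/(m:ℝ)) * ∑ i,
          (if ε i then (1:ℝ) else -1) * (f j ((w i).2) - f j ((w i).1))| ≤ 2 * C := by
      intro w
      refine abs_ciSup_le' fun j => habs (2*C) _ (fun i => ?_)
      rw [abs_mul]
      calc |if ε i then (1:ℝ) else -1| * |f j ((w i).2) - f j ((w i).1)|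
          ≤ 1 * (2 * C) := mul_le_mul (hsgn1 ε i)
            (habs_sub _ _ (hbdd j _) (hbdd j _)) (abs_nonneg _) zero_le_one
        _ = 2 * C := one_mul _
    have hpoint : ∀ w : Fin m → Z × Z,
        (⨆ j, (1/(m:ℝ)) * ∑ i,
            (if ε i then (1:ℝ) else -1) * (f j ((w i).2) - f j ((w i).1)))
        ≤ (⨆ j, (1/(m:ℝ)) * ∑ i, (if ε i then (1:ℝ) else -1) * f j ((w i).2))
          + ⨆ j, (1/(m:ℝ)) * ∑ i, (if !ε i then (1:ℝ) else -1) * f j ((w i).1) := by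
      intro w
      refine ciSup_le fun j => ?_
      have hrw : (1/(m:ℝ)) * ∑ i,
            (if ε i then (1:ℝ) else -1) * (f j ((w i).2) - f j ((w i).1))
          = (1/(m:ℝ)) * ∑ i, (if ε i then (1:ℝ) else -1) * f j ((w i).2)
            + (1/(m:ℝ)) * ∑ i, (if !ε i then (1:ℝ) else -1) * f j ((w i).1) := by
        rw [← mul_add, ← Finset.sum_add_distrib]
        congr 1
        refine Finset.sum_congr rfl fun i _ => ?_
        by_cases h : ε i <;> simp [h] <;> ring
      rw [hrw]
      refine add_le_add ?_ ?_
      · exact le_ciSup (f := fun j' => (1/(m:ℝ)) * ∑ i, (if ε i then (1:ℝ) else -1) * f j' ((w i).2))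
          (Set.Finite.bddAbove (Set.finite_range _)) j
      · exact le_ciSup (f := fun j' => (1/(m:ℝ)) * ∑ i, (if !ε i then (1:ℝ) else -1) * f j' ((w i).1))
          (Set.Finite.bddAbove (Set.finite_range _)) j
    calc (∫ w, (⨆ j, (1/(m:ℝ)) * ∑ i,
            (if ε i then (1:ℝ) else -1) * (f j ((w i).2) - f j ((w i).1))) ∂π2)
        ≤ ∫ w, ((⨆ j, (1/(m:ℝ)) * ∑ i, (if ε i then (1:ℝ) else -1) * f j ((w i).2))
            + ⨆ j, (1/(m:ℝ)) * ∑ i, (if !ε i then (1:ℝ) else -1) * f j ((w i).1)) ∂π2 :=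
          integral_mono (int_of_bdd _ hHε_meas hHε_bdd)
            ((int_of_bdd _ hsup2_meas hsup2_bdd).add (int_of_bdd _ hsup1_meas hsup1_bdd)) hpoint
      _ = (∫ w, (⨆ j, (1/(m:ℝ)) * ∑ i, (if ε i then (1:ℝ) else -1) * f j ((w i).2)) ∂π2)
            + ∫ w, (⨆ j, (1/(m:ℝ)) * ∑ i, (if !ε i then (1:ℝ) else -1) * f j ((w i).1)) ∂π2 :=
          integral_add (int_of_bdd _ hsup2_meas hsup2_bdd) (int_of_bdd _ hsup1_meas hsup1_bdd)
      _ = _ := by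
          congr 1
          · exact integral_comp_mp hproj2 (hRad_meas fun i => if ε i then (1:ℝ) else -1)
          · exact integral_comp_mp hproj1 (hRad_meas fun i => if !ε i then (1:ℝ) else -1)
  -- integrability of Rademacher suprema
  have hRad_int : ∀ ε : Fin m → Bool,
      Integrable (fun z : Fin m → Z =>
        ⨆ j, (1/(m:ℝ)) * ∑ i, (if ε i then (1:ℝ) else -1) * f j (z i)) ν :=
    fun ε => int_of_bdd ν (hRad_meas _) (hRad_bdd _ (hsgn1 ε))
  have hRHS : (∫ z, ((∑ ε : Fin m → Bool,
        ⨆ j, (1/(m:ℝ)) * ∑ i, (if ε i then (1:ℝ) else -1) * f j (z i)) / 2 ^ m) ∂ν)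
      = (∑ ε : Fin m → Bool, ∫ z,
          (⨆ j, (1/(m:ℝ)) * ∑ i, (if ε i then (1:ℝ) else -1) * f j (z i)) ∂ν) / 2 ^ m := by
    rw [integral_div, integral_finset_sum _ (fun ε _ => hRad_int ε)]
  have hre : (∑ ε : Fin m → Bool, ∫ z,
        (⨆ j, (1/(m:ℝ)) * ∑ i, (if !ε i then (1:ℝ) else -1) * f j (z i)) ∂ν)
      = ∑ ε : Fin m → Bool, ∫ z,
        (⨆ j, (1/(m:ℝ)) * ∑ i, (if ε i then (1:ℝ) else -1) * f j (z i)) ∂ν :=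
    Fintype.sum_bijective (fun ε : Fin m → Bool => fun i => !ε i)
      (Function.Involutive.bijective fun ε => by funext i; simp) _ _ (fun ε => rfl)
  have hcard : ((2:ℝ)) ^ m ≠ 0 := by positivity
  calc (∫ z, (⨆ j, ((∫ t, f j t ∂μ) - (1/(m:ℝ)) * ∑ i, f j (z i))) ∂ν)
      ≤ ∫ p, (⨆ j, ((1/(m:ℝ)) * ∑ i, f j (p.2 i) - (1/(m:ℝ)) * ∑ i, f j (p.1 i)))
          ∂(ν.prod ν) := step1
    _ = ∫ w, (⨆ j, (1/(m:ℝ)) * ∑ i, (f j ((w i).2) - f j ((w i).1))) ∂π2 := step2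
    _ = (∑ ε : Fin m → Bool, ∫ w, (⨆ j, (1/(m:ℝ)) * ∑ i,
          (if ε i then (1:ℝ) else -1) * (f j ((w i).2) - f j ((w i).1))) ∂π2) / 2 ^ m := by
        rw [Finset.sum_congr rfl (fun ε _ => (step3 ε).symm), Finset.sum_const,
          Finset.card_univ]
        have hc : Fintype.card (Fin m → Bool) = 2 ^ m := by
          simp [Fintype.card_fun]
        rw [hc, nsmul_eq_mul]
        push_cast
        rw [mul_div_cancel_left₀ _ hcard]
    _ ≤ (∑ ε : Fin m → Bool,
          ((∫ z, (⨆ j, (1/(m:ℝ)) * ∑ i, (if ε i then (1:ℝ) else -1) * f j (z i)) ∂ν)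
            + ∫ z, (⨆ j, (1/(m:ℝ)) * ∑ i, (if !ε i then (1:ℝ) else -1) * f j (z i)) ∂ν))
          / 2 ^ m := by
        gcongr with ε hε
        exact step45 ε
    _ = (2 * ∑ ε : Fin m → Bool, ∫ z,
          (⨆ j, (1/(m:ℝ)) * ∑ i, (if ε i then (1:ℝ) else -1) * f j (z i)) ∂ν) / 2 ^ m := by
        rw [Finset.sum_add_distrib, hre]; ring
    _ = 2 * ((∑ ε : Fin m → Bool, ∫ z,
          (⨆ j, (1/(m:ℝ)) * ∑ i, (if ε i then (1:ℝ) else -1) * f j (z i)) ∂ν) / 2 ^ m) := by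
        ring
    _ = 2 * ∫ z, ((∑ ε : Fin m → Bool,
          ⨆ j, (1/(m:ℝ)) * ∑ i, (if ε i then (1:ℝ) else -1) * f j (z i)) / 2 ^ m) ∂ν := by
        rw [hRHS]
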